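/- Let α, β ∈ ℝ, let f₁, f₂, f₃, f₄ : ℝ⁴ → ℝ, and define X : ℝ⁴ → ℝ⁴ by X(x) = A(α,β)·x + (f₁(x), f₂(x), f₃(x), f₄(x)). Let S₂ = diag(−1,1,1,−1). Then X is both R₀-reversible and S₂-reversible if and only if for all (x₁,x₂,y₁,y₂) ∈ ℝ⁴: f₁(x₁,x₂,y₁,y₂) = −f₁(x₁,−x₂,y₁,−y₂) = f₁(−x₁,x₂,y₁,−y₂); f₂(x₁,x₂,y₁,y₂) = f₂(x₁,−x₂,y₁,−y₂) = −f₂(−x₁,x₂,y₁,−y₂); f₃(x₁,x₂,y₁,y₂) = −f₃(x₁,−x₂,y₁,−y₂) = −f₃(−x₁,x₂,y₁,−y₂); f₄(x₁,x₂,y₁,y₂) = f₄(x₁,−x₂,y₁,−y₂) = f₄(−x₁,x₂,y₁,−y₂). Moreover, these conditions imply f₁(x₁,0,y₁,0) = f₃(x₁,0,y₁,0) = 0 and f₂(0,x₂,y₁,0) = f₃(0,x₂,y₁,0) = 0 for all x₁,x₂,y₁ ∈ ℝ. -/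
import Mathlib


open Matrix

noncomputable def Amat (α β : ℝ) : Matrix (Fin 4) (Fin 4) ℝ :=
  !![0, -α, 0, 0;
     α, 0, 0, 0;
     0, 0, 0, -β;
     0, 0, β, 0]

noncomputable def R0 : Matrix (Fin 4) (Fin 4) ℝ :=
  !![1, 0, 0, 0;
     0, -1, 0, 0;
     0, 0, 1, 0;
     0, 0, 0, -1]

/-- `M`-reversibility of a vector field on ℝ⁴. -/
def MRev (M : Matrix (Fin 4) (Fin 4) ℝ) (X : (Fin 4 → ℝ) → (Fin 4 → ℝ)) : Prop :=
  ∀ x, M *ᵥ X x = -X (M *ᵥ x)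

private lemma R0_mv (a b c d : ℝ) : R0 *ᵥ ![a,b,c,d] = ![a,-b,c,-d] := by
  funext i; fin_cases i <;> simp [R0, mulVec, dotProduct, Fin.sum_univ_four]

private lemma S2_mv (a b c d : ℝ) :
    (!![-1, 0, 0, 0; 0, 1, 0, 0; 0, 0, 1, 0; 0, 0, 0, -1] : Matrix (Fin 4) (Fin 4) ℝ) *ᵥ ![a,b,c,d]
      = ![-a,b,c,-d] := by
  funext i; fin_cases i <;> simp [mulVec, dotProduct, Fin.sum_univ_four]

private lemma A_mv (α β a b c d : ℝ) :
    Amat α β *ᵥ ![a,b,c,d] = ![-(α*b), α*a, -(β*d), β*c] := by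
  funext i; fin_cases i <;>
    simp [Amat, mulVec, dotProduct, Fin.sum_univ_four, mul_comm]

private lemma vec_eta (x : Fin 4 → ℝ) : x = ![x 0, x 1, x 2, x 3] := by
  funext i; fin_cases i <;> simp

theorem stmt_6 (α β : ℝ) (f₁ f₂ f₃ f₄ : (Fin 4 → ℝ) → ℝ)
    (X : (Fin 4 → ℝ) → (Fin 4 → ℝ))
    (hX : ∀ x, X x = Amat α β *ᵥ x + ![f₁ x, f₂ x, f₃ x, f₄ x])
    (S₂ : Matrix (Fin 4) (Fin 4) ℝ)
    (hS₂ : S₂ = !![-1, 0, 0, 0; 0, 1, 0, 0; 0, 0, 1, 0; 0, 0, 0, -1]) :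
    ((MRev R0 X ∧ MRev S₂ X) ↔
      (∀ x₁ x₂ y₁ y₂ : ℝ,
        (f₁ ![x₁, x₂, y₁, y₂] = -f₁ ![x₁, -x₂, y₁, -y₂] ∧
         f₁ ![x₁, x₂, y₁, y₂] = f₁ ![-x₁, x₂, y₁, -y₂]) ∧
        (f₂ ![x₁, x₂, y₁, y₂] = f₂ ![x₁, -x₂, y₁, -y₂] ∧
         f₂ ![x₁, x₂, y₁, y₂] = -f₂ ![-x₁, x₂, y₁, -y₂]) ∧
        (f₃ ![x₁, x₂, y₁, y₂] = -f₃ ![x₁, -x₂, y₁, -y₂] ∧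
         f₃ ![x₁, x₂, y₁, y₂] = -f₃ ![-x₁, x₂, y₁, -y₂]) ∧
        (f₄ ![x₁, x₂, y₁, y₂] = f₄ ![x₁, -x₂, y₁, -y₂] ∧
         f₄ ![x₁, x₂, y₁, y₂] = f₄ ![-x₁, x₂, y₁, -y₂]))) ∧
    ((∀ x₁ x₂ y₁ y₂ : ℝ,
        (f₁ ![x₁, x₂, y₁, y₂] = -f₁ ![x₁, -x₂, y₁, -y₂] ∧
         f₁ ![x₁, x₂, y₁, y₂] = f₁ ![-x₁, x₂, y₁, -y₂]) ∧
        (f₂ ![x₁, x₂, y₁, y₂] = f₂ ![x₁, -x₂, y₁, -y₂] ∧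
         f₂ ![x₁, x₂, y₁, y₂] = -f₂ ![-x₁, x₂, y₁, -y₂]) ∧
        (f₃ ![x₁, x₂, y₁, y₂] = -f₃ ![x₁, -x₂, y₁, -y₂] ∧
         f₃ ![x₁, x₂, y₁, y₂] = -f₃ ![-x₁, x₂, y₁, -y₂]) ∧
        (f₄ ![x₁, x₂, y₁, y₂] = f₄ ![x₁, -x₂, y₁, -y₂] ∧
         f₄ ![x₁, x₂, y₁, y₂] = f₄ ![-x₁, x₂, y₁, -y₂])) →
      ∀ x₁ x₂ y₁ : ℝ,
        f₁ ![x₁, 0, y₁, 0] = 0 ∧ f₃ ![x₁, 0, y₁, 0] = 0 ∧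
        f₂ ![0, x₂, y₁, 0] = 0 ∧ f₃ ![0, x₂, y₁, 0] = 0) := by
  subst hS₂
  constructor
  · constructor
    · rintro ⟨hR, hS⟩ x₁ x₂ y₁ y₂
      have h1 := hR ![x₁, x₂, y₁, y₂]
      have h2 := hS ![x₁, x₂, y₁, y₂]
      simp only [hX, mulVec_add, R0_mv, S2_mv, A_mv] at h1 h2
      have e10 := congrFun h1 0
      have e11 := congrFun h1 1
      have e12 := congrFun h1 2
      have e13 := congrFun h1 3
      have e20 := congrFun h2 0
      have e21 := congrFun h2 1
      have e22 := congrFun h2 2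
      have e23 := congrFun h2 3
      simp at e10 e11 e12 e13 e20 e21 e22 e23
      refine ⟨⟨by linarith, by linarith⟩, ⟨by linarith, by linarith⟩,
        ⟨by linarith, by linarith⟩, ⟨by linarith, by linarith⟩⟩
    · intro hf
      constructor <;> intro x <;> rw [vec_eta x] <;>
        simp only [hX, mulVec_add, R0_mv, S2_mv, A_mv] <;>
        obtain ⟨⟨h1a, h1b⟩, ⟨h2a, h2b⟩, ⟨h3a, h3b⟩, ⟨h4a, h4b⟩⟩ :=
          hf (x 0) (x 1) (x 2) (x 3) <;>
        funext i <;> fin_cases i <;> simp <;> linarith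
  · intro h x₁ x₂ y₁
    have h1 := (h x₁ 0 y₁ 0).1.1
    have h3 := (h x₁ 0 y₁ 0).2.2.1.1
    have h2 := (h 0 x₂ y₁ 0).2.1.2
    have h3' := (h 0 x₂ y₁ 0).2.2.1.2
    simp only [neg_zero] at h1 h3 h2 h3'
    exact ⟨by linarith, by linarith, by linarith, by linarith⟩
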